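/- arXiv:2211.02786 — 2 statements merged into one kernel-verified Lean document; each statement's English description precedes it below -/
import Mathlib

section
/- Let e ∈ ℝ³ be a unit vector (‖e‖ = 1) and θ ∈ ℝ. Then the matrix exponential of θ·ê satisfies Rodrigues' rotation formula: exp(θ · ê) = I + (sin θ) · ê + (1 − cos θ) · ê². -/
/-!
For a unit vector `e`, the hat matrix satisfies `ê³ = -‖e‖² ê = -ê`. In any real Banach algebra,
if `K³ = -K` then `f t = 1 + sin t • K + (1 - cos t) • K²` solves `f' = K f` with `f 0 = 1`, as does
`t ↦ exp (t • K)`; the two agree because `s ↦ exp ((t - s) • K) * f s` has zero derivative.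
-/

open Matrix

/-- The hat (skew-symmetric) matrix associated with a vector in ℝ³. -/
def hat (ω : Fin 3 → ℝ) : Matrix (Fin 3) (Fin 3) ℝ :=
  !![0, -ω 2, ω 1; ω 2, 0, -ω 0; -ω 1, ω 0, 0]

open NormedSpace

theorem hat_pow_three (ω : Fin 3 → ℝ) :
    hat ω ^ 3 = -(ω 0 ^ 2 + ω 1 ^ 2 + ω 2 ^ 2) • hat ω := by
  ext i j
  fin_cases i <;> fin_cases j <;>
    simp [hat, pow_succ, Matrix.mul_apply, Fin.sum_univ_three] <;> ring

section BanachAlgebra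

variable {A : Type*} [NormedRing A] [NormedAlgebra ℝ A]

theorem hasDerivAt_rodrigues {K : A} (hK : K ^ 3 = -K) (t : ℝ) :
    HasDerivAt (fun t => 1 + Real.sin t • K + (1 - Real.cos t) • K ^ 2)
      (K * (1 + Real.sin t • K + (1 - Real.cos t) • K ^ 2)) t := by
  refine (((Real.hasDerivAt_sin t).smul_const K).const_add 1 |>.add
    (((Real.hasDerivAt_cos t).const_sub 1).smul_const (K ^ 2))).congr_deriv ?_
  rw [mul_add, mul_add, mul_smul_comm, mul_smul_comm, ← pow_succ', hK, mul_one, ← sq]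
  module

variable [CompleteSpace A]

theorem eq_exp_smul_mul_of_hasDerivAt {K : A} {f : ℝ → A}
    (hf : ∀ t, HasDerivAt f (K * f t) t) (t : ℝ) : f t = exp (t • K) * f 0 := by
  have hderiv : ∀ s : ℝ, HasDerivAt (fun s => exp ((t - s) • K) * f s) 0 s := fun s => by
    have hexp := (hasDerivAt_exp_smul_const K (t - s)).scomp s ((hasDerivAt_id s).const_sub t)
    refine (hexp.mul (hf s)).congr_deriv ?_
    simp [mul_assoc]
  simpa using is_const_of_deriv_eq_zero (fun s => (hderiv s).differentiableAt)
      (fun s => (hderiv s).deriv) t 0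

theorem exp_smul_of_pow_three_eq_neg {K : A} (hK : K ^ 3 = -K) (θ : ℝ) :
    exp (θ • K) = 1 + Real.sin θ • K + (1 - Real.cos θ) • K ^ 2 := by
  simpa using (eq_exp_smul_mul_of_hasDerivAt (hasDerivAt_rodrigues hK) θ).symm

end BanachAlgebra

theorem rodrigues_formula (e : EuclideanSpace ℝ (Fin 3)) (he : ‖e‖ = 1) (θ : ℝ) :
    NormedSpace.exp (θ • hat ((WithLp.equiv 2 (Fin 3 → ℝ)) e))
      = 1 + Real.sin θ • hat ((WithLp.equiv 2 (Fin 3 → ℝ)) e)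
          + (1 - Real.cos θ) • hat ((WithLp.equiv 2 (Fin 3 → ℝ)) e) ^ 2 := by
  -- matrices carry no global norm; any Banach-algebra norm will do, as `exp` only sees the topology
  let _ : NormedRing (Matrix (Fin 3) (Fin 3) ℝ) := Matrix.linftyOpNormedRing
  let _ : NormedAlgebra ℝ (Matrix (Fin 3) (Fin 3) ℝ) := Matrix.linftyOpNormedAlgebra
  have hsq : e 0 ^ 2 + e 1 ^ 2 + e 2 ^ 2 = 1 := by
    simpa [he, Fin.sum_univ_three] using (EuclideanSpace.real_norm_sq_eq e).symm
  apply exp_smul_of_pow_three_eq_neg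
  simpa [hsq] using hat_pow_three (WithLp.equiv 2 _ e)
end

section
/- Let p_a : ℝ → ℝ³ be differentiable, let R_a, R_b : ℝ → M₃(ℝ) be differentiable with R_a(t) · R_a(t)ᵀ = I, det R_a(t) = 1, and R_b(t) · R_b(t)ᵀ = I for all t, and let q₁, q₂ ∈ ℝ³ be fixed vectors. Define p_b(t) = p_a(t) + R_a(t) · q₁ and p_e(t) = p_b(t) + R_a(t) · R_b(t) · q₂. Suppose ω_a, ω_b : ℝ → ℝ³ satisfy ω_a(t)^∧ = R_a′(t) · R_a(t)ᵀ and ω_b(t)^∧ = R_b′(t) · R_b(t)ᵀ for all t. Then the end-point linear velocity satisfies p_e′(t) = p_a′(t) + ω_a(t) × (p_e(t) − p_a(t)) + (R_a(t) · ω_b(t)) × (p_e(t) − p_b(t)) for all t ∈ ℝ. -/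
/-!
Writing `p_e = p_a + R_a (q₁ + R_b q₂)`, the product rule gives
`ṗ_e = ṗ_a + Ṙ_a (q₁ + R_b q₂) + R_a Ṙ_b q₂`. Since `Ṙ = ω̂ R` for a rotation `R`, the second term is
`ω_a × (p_e - p_a)`, and the third is `R_a (ω_b × R_b q₂) = (R_a ω_b) × (p_e - p_b)` because a matrix
of `SO(3)` preserves the cross product.
-/

open Matrix

/-- The entrywise derivative of a matrix-valued function of a real variable. -/
noncomputable def matDeriv (R : ℝ → Matrix (Fin 3) (Fin 3) ℝ) (t : ℝ) :
    Matrix (Fin 3) (Fin 3) ℝ :=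
  Matrix.of fun i j => deriv (fun s => R s i j) t

theorem transpose_mulVec_cross_mulVec {R : Type*} [CommRing R] (A : Matrix (Fin 3) (Fin 3) R)
    (u v : Fin 3 → R) : Aᵀ *ᵥ ((A *ᵥ u) ⨯₃ (A *ᵥ v)) = A.det • (u ⨯₃ v) := by
  ext i
  fin_cases i <;>
    simp [cross_apply, det_fin_three, mulVec, dotProduct, Fin.sum_univ_three] <;> ring

theorem mulVec_cross_of_special_orthogonal {R : Type*} [CommRing R]
    {A : Matrix (Fin 3) (Fin 3) R} (hA : A * Aᵀ = 1) (hdet : A.det = 1) (u v : Fin 3 → R) :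
    A *ᵥ (u ⨯₃ v) = (A *ᵥ u) ⨯₃ (A *ᵥ v) := by
  rw [← one_smul R (u ⨯₃ v), ← hdet, ← transpose_mulVec_cross_mulVec, mulVec_mulVec, hA,
    one_mulVec]

theorem hat_mulVec (ω v : Fin 3 → ℝ) : hat ω *ᵥ v = ω ⨯₃ v := by
  ext i
  fin_cases i <;>
    simp [hat, cross_apply, mulVec, dotProduct, Fin.sum_univ_three] <;> ring

theorem hasDerivAt_mulVec {R : ℝ → Matrix (Fin 3) (Fin 3) ℝ} {u : ℝ → Fin 3 → ℝ}
    {u' : Fin 3 → ℝ} {t : ℝ} (hR : ∀ i j, DifferentiableAt ℝ (fun s => R s i j) t)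
    (hu : HasDerivAt u u' t) :
    HasDerivAt (fun s => R s *ᵥ u s) (matDeriv R t *ᵥ u t + R t *ᵥ u') t := by
  rw [hasDerivAt_pi] at hu ⊢
  intro i
  have h := HasDerivAt.fun_sum (u := Finset.univ) fun j _ => (hR i j).hasDerivAt.mul (hu j)
  simpa [mulVec, dotProduct, matDeriv, Finset.sum_add_distrib] using h

theorem matDeriv_mulVec_eq_cross {R : ℝ → Matrix (Fin 3) (Fin 3) ℝ} {ω : Fin 3 → ℝ} {t : ℝ}
    (hR : R t * (R t)ᵀ = 1) (hω : hat ω = matDeriv R t * (R t)ᵀ) (v : Fin 3 → ℝ) :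
    matDeriv R t *ᵥ v = ω ⨯₃ (R t *ᵥ v) := by
  have hR' : (R t)ᵀ * R t = 1 := mul_eq_one_comm.mp hR
  rw [← hat_mulVec, mulVec_mulVec, hω, Matrix.mul_assoc, hR', Matrix.mul_one]

theorem multi_link_end_point_velocity
    (pa : ℝ → Fin 3 → ℝ) (hpa : Differentiable ℝ pa)
    (Ra Rb : ℝ → Matrix (Fin 3) (Fin 3) ℝ)
    (hRa : ∀ i j, Differentiable ℝ fun t => Ra t i j)
    (hRb : ∀ i j, Differentiable ℝ fun t => Rb t i j)
    (horthA : ∀ t : ℝ, Ra t * (Ra t)ᵀ = 1)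
    (hdetA : ∀ t : ℝ, (Ra t).det = 1)
    (horthB : ∀ t : ℝ, Rb t * (Rb t)ᵀ = 1)
    (q₁ q₂ : Fin 3 → ℝ)
    (ωa ωb : ℝ → Fin 3 → ℝ)
    (hωa : ∀ t : ℝ, hat (ωa t) = matDeriv Ra t * (Ra t)ᵀ)
    (hωb : ∀ t : ℝ, hat (ωb t) = matDeriv Rb t * (Rb t)ᵀ)
    (pb pe : ℝ → Fin 3 → ℝ)
    (hpb : ∀ t : ℝ, pb t = pa t + (Ra t).mulVec q₁)
    (hpe : ∀ t : ℝ, pe t = pb t + (Ra t * Rb t).mulVec q₂) (t : ℝ) :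
    deriv pe t = deriv pa t + crossProduct (ωa t) (pe t - pa t)
        + crossProduct ((Ra t).mulVec (ωb t)) (pe t - pb t) := by
  have hpe_eq : pe = fun s => pa s + Ra s *ᵥ (q₁ + Rb s *ᵥ q₂) := funext fun s => by
    rw [hpe, hpb, mulVec_add, mulVec_mulVec, add_assoc]
  have hRb_mulVec : HasDerivAt (fun s => Rb s *ᵥ q₂) (matDeriv Rb t *ᵥ q₂) t := by
    simpa using hasDerivAt_mulVec (fun i j => (hRb i j).differentiableAt) (hasDerivAt_const t q₂)
  have hvel : HasDerivAt pe
      (deriv pa t + (matDeriv Ra t *ᵥ (q₁ + Rb t *ᵥ q₂) + Ra t *ᵥ (matDeriv Rb t *ᵥ q₂))) t := by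
    rw [hpe_eq]
    refine (hpa t).hasDerivAt.fun_add (hasDerivAt_mulVec (fun i j => (hRa i j).differentiableAt) ?_)
    simpa using (hasDerivAt_const t q₁).fun_add hRb_mulVec
  have hpe_sub_pa : pe t - pa t = Ra t *ᵥ (q₁ + Rb t *ᵥ q₂) := by
    rw [hpe_eq, add_sub_cancel_left]
  have hpe_sub_pb : pe t - pb t = Ra t *ᵥ (Rb t *ᵥ q₂) := by
    rw [hpe t, add_sub_cancel_left, mulVec_mulVec]
  rw [hvel.deriv, hpe_sub_pa, hpe_sub_pb, add_assoc, matDeriv_mulVec_eq_cross (horthA t) (hωa t),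
    matDeriv_mulVec_eq_cross (horthB t) (hωb t),
    mulVec_cross_of_special_orthogonal (horthA t) (hdetA t)]
end
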